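/- arXiv:math/0505213 — 3 statements merged into one kernel-verified Lean document; each statement's English description precedes it below -/
import Mathlib

section
/- Let n ≥ 1 be an integer and let x_1,…,x_n ∈ ℂ, nonzero a_1,…,a_n ∈ ℂ, and t ∈ ℂ with t ≠ 1. For each j = 1,…,n let P_j be a complex polynomial of degree at most j whose coefficients satisfy (coefficient of X^j in P_j) = (−1)^j · t a_1⋯a_j · (constant coefficient of P_j). Then det_{1≤i,j≤n}( P_j(x_i) · ∏_{k=j+1}^{n} (1 − a_k x_i) ) = ((1 − t a_1⋯a_n x_1⋯x_n)/(1 − t)) · ∏_{i=1}^{n} P_i(1/a_i) · ∏_{1≤i<j≤n} a_j (x_j − x_i). -/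
open Finset Polynomial

/-!
Write `Q_j = P_j ∏_{k>j} (1 - a_k X)` for the `j`-th column function. Every `Q_j` has degree
at most `n` and norm `t a_1⋯a_n`, and so has any linear combination of them. Hence, as a
polynomial in `x_1`, `(1 - t) det` has degree at most `n` and norm `t a_1⋯a_n` and vanishes at
`x_2, …, x_n`, which forces it to be `β ∏_{i>1} (x_1 - x_i) · (1 - t a_1⋯a_n x_2⋯x_n x_1)`.
At `x_1 = 1/a_n` the first row becomes `(0, …, 0, P_n(1/a_n))`, and expanding along it relates
`β` to the determinant of size `n - 1`, which is known by induction. Dividing by the factors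
`x_1 - x_i` and `1 - t a_1⋯a_{n-1} x_2⋯x_n` requires generic points, so the identity is proved
for the variables of a polynomial ring and then specialized.
-/

namespace Fin

variable {M : Type*} [CommMonoid M]

theorem prod_Ioi_castSucc {m : ℕ} (f : Fin (m + 1) → M) (j : Fin m) :
    ∏ k ∈ Ioi j.castSucc, f k = f (last m) * ∏ k ∈ Ioi j, f k.castSucc := by
  have : Ioi j.castSucc = insert (last m) ((Ioi j).map castSuccEmb) := by
    rw [map_castSuccEmb_Ioi, Ioo_insert_right (castSucc_lt_last j)]
    ext k
    simp [le_last]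
  rw [this, prod_insert (by simp), prod_map]
  rfl

theorem prod_prod_Ioi_eq_prod_pow {n : ℕ} (f : Fin n → M) :
    ∏ i, ∏ j ∈ Ioi i, f j = ∏ j, f j ^ (j : ℕ) := by
  rw [prod_comm' (t' := univ) (s' := fun j => Iio j) (fun i j => by simp)]
  simp

theorem prod_Iic_mul_prod_Ioi {n : ℕ} (f : Fin n → M) (j : Fin n) :
    (∏ k ∈ Iic j, f k) * ∏ k ∈ Ioi j, f k = ∏ k, f k := by
  rw [← prod_union (disjoint_left.2 fun k hk hk' => by simp_all [not_lt_of_ge])]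
  congr
  ext k
  simp [le_or_gt]

theorem prod_prod_Ioi_sub_cons {R : Type*} [CommRing R] {m : ℕ} (x₀ : R) (y : Fin m → R) :
    ∏ i, ∏ j ∈ Ioi i,
        ((cons x₀ y : Fin (m + 1) → R) j - (cons x₀ y : Fin (m + 1) → R) i) =
      (-1) ^ m * (∏ j, (x₀ - y j)) * ∏ i, ∏ j ∈ Ioi i, (y j - y i) := by
  rw [prod_univ_succ, prod_Ioi_zero]
  simp only [prod_Ioi_succ, cons_succ, cons_zero]
  congr 1
  rw [← prod_const, ← prod_mul_distrib]
  exact prod_congr rfl fun j _ => by ring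

end Fin

namespace Polynomial

variable {R : Type*} [CommRing R] {n m : ℕ}

/-- Theta functions of norm `t` for `A_{m-1}` at `p = 0`. -/
def theta (m : ℕ) (t : R) : Submodule R R[X] where
  carrier := {f | f.natDegree ≤ m ∧ f.coeff m = (-1) ^ m * t * f.coeff 0}
  add_mem' := by
    rintro f g ⟨hf, hf'⟩ ⟨hg, hg'⟩
    exact ⟨natDegree_add_le_of_degree_le hf hg, by simp only [coeff_add, hf', hg']; ring⟩
  zero_mem' := by simp
  smul_mem' := by
    rintro c f ⟨hf, hf'⟩
    exact ⟨(natDegree_smul_le c f).trans hf, by simp only [coeff_smul, hf', smul_eq_mul]; ring⟩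

theorem one_mem_theta : (1 : R[X]) ∈ theta 0 1 := ⟨by simp, by simp⟩

theorem one_sub_C_mul_X_mem_theta (a : R) : 1 - C a * X ∈ theta 1 a := by
  refine ⟨natDegree_sub_le_of_le (natDegree_one.trans_le zero_le_one)
    ((natDegree_C_mul_le a X).trans natDegree_X_le), ?_⟩
  simp [coeff_one, coeff_X]

theorem mul_mem_theta {f g : R[X]} {m l : ℕ} {s u : R} (hf : f ∈ theta m s)
    (hg : g ∈ theta l u) : f * g ∈ theta (m + l) (s * u) := by
  refine ⟨natDegree_mul_le_of_le hf.1 hg.1, ?_⟩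
  rw [coeff_mul_add_eq_of_natDegree_le hf.1 hg.1, hf.2, hg.2, mul_coeff_zero, pow_add]
  ring

theorem map_mem_theta {S : Type*} [CommRing S] (φ : R →+* S) {m : ℕ} {t : R} {f : R[X]}
    (hf : f ∈ theta m t) : f.map φ ∈ theta m (φ t) :=
  ⟨natDegree_map_le.trans hf.1, by simp [hf.2]⟩

theorem prod_mem_theta {ι : Type*} (s : Finset ι) {f : ι → R[X]} {d : ι → ℕ}
    {u : ι → R} (h : ∀ i ∈ s, f i ∈ theta (d i) (u i)) :
    ∏ i ∈ s, f i ∈ theta (∑ i ∈ s, d i) (∏ i ∈ s, u i) := by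
  classical
  induction s using Finset.induction_on with
  | empty => simpa using one_mem_theta
  | insert i s hi ih =>
    rw [prod_insert hi, prod_insert hi, sum_insert hi]
    exact mul_mem_theta (h i (mem_insert_self i s)) (ih fun j hj => h j (mem_insert_of_mem hj))

theorem prod_one_sub_C_mul_X_mem_theta {ι : Type*} (s : Finset ι) (a : ι → R) :
    ∏ i ∈ s, (1 - C (a i) * X) ∈ theta #s (∏ i ∈ s, a i) := by
  simpa using prod_mem_theta s fun i _ => one_sub_C_mul_X_mem_theta (a i)

theorem prod_X_sub_C_dvd_of_isRoot [IsDomain R] {ι : Type*} {s : Finset ι} {y : ι → R}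
    (hy : Set.InjOn y s) {f : R[X]} (hf : ∀ i ∈ s, f.IsRoot (y i)) :
    ∏ i ∈ s, (X - C (y i)) ∣ f := by
  rcases eq_or_ne f 0 with rfl | hf0
  · exact dvd_zero _
  have := (Multiset.prod_X_sub_C_dvd_iff_le_roots hf0 (s.val.map y)).2 ?_
  · rwa [Multiset.map_map] at this
  rw [Multiset.le_iff_subset (Multiset.nodup_map_iff_inj_on s.nodup |>.2 hy)]
  intro r hr
  obtain ⟨i, hi, rfl⟩ := Multiset.mem_map.1 hr
  exact (mem_roots hf0).2 (hf i hi)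

theorem exists_eq_C_mul_of_mem_theta [IsDomain R] {ι : Type*} {s : Finset ι} {c : R} {f : R[X]}
    (hf : f ∈ theta (#s + 1) c) {y : ι → R} (hy : Set.InjOn y s)
    (hroots : ∀ i ∈ s, f.IsRoot (y i)) :
    ∃ β, f = C β * ((∏ i ∈ s, (X - C (y i))) * (1 - C (c * ∏ i ∈ s, y i) * X)) := by
  obtain ⟨q, rfl⟩ := prod_X_sub_C_dvd_of_isRoot hy hroots
  set p := ∏ i ∈ s, (X - C (y i))
  have hp : p.Monic := monic_prod_of_monic _ _ fun i _ => monic_X_sub_C (y i)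
  have hpdeg : p.natDegree = #s := by
    simp [p, natDegree_prod_of_monic _ _ fun i _ => monic_X_sub_C (y i)]
  have hq : q.natDegree ≤ 1 := by
    rcases eq_or_ne q 0 with rfl | hq0
    · simp
    · have := hp.natDegree_mul' hq0
      have := hf.1
      omega
  have hp0 : p.coeff 0 = (-1) ^ #s * ∏ i ∈ s, y i := by
    simp [p, coeff_zero_eq_eval_zero, eval_prod, prod_neg]
  have hα : q.coeff 1 = -(c * ∏ i ∈ s, y i) * q.coeff 0 := by
    have hnorm := hf.2
    rw [coeff_mul_add_eq_of_natDegree_le hpdeg.le hq, ← hpdeg, hp.coeff_natDegree, hpdeg,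
      mul_coeff_zero, hp0] at hnorm
    have hsq : ((-1 : R) ^ #s) ^ 2 = 1 := by rw [← pow_mul, pow_mul', neg_one_sq, one_pow]
    linear_combination hnorm - (c * (∏ i ∈ s, y i) * q.coeff 0) * hsq
  refine ⟨q.coeff 0, ?_⟩
  conv_lhs => rw [eq_X_add_C_of_natDegree_le_one hq, hα]
  simp only [C_mul, C_neg]
  ring

def evalMatrix {ι κ : Type*} (Q : κ → R[X]) (x : ι → R) : Matrix ι κ R :=
  Matrix.of fun i j => (Q j).eval (x i)

@[simp]
theorem evalMatrix_apply {ι κ : Type*} (Q : κ → R[X]) (x : ι → R) (i : ι) (j : κ) :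
    evalMatrix Q x i j = (Q j).eval (x i) :=
  rfl

theorem map_evalMatrix {S : Type*} [CommRing S] (φ : R →+* S) {ι κ : Type*} (Q : κ → R[X])
    (x : ι → R) : (evalMatrix Q x).map φ = evalMatrix (fun j => (Q j).map φ) (φ ∘ x) := by
  ext i j
  simp [eval_map]

theorem det_mem_of_row_zero_mem {m : ℕ} {M : Submodule R R[X]}
    (N : Matrix (Fin (m + 1)) (Fin (m + 1)) R[X]) (B : Matrix (Fin m) (Fin (m + 1)) R)
    (h0 : ∀ j, N 0 j ∈ M) (hB : ∀ i j, N i.succ j = C (B i j)) : N.det ∈ M := by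
  rw [Matrix.det_succ_row_zero]
  refine Submodule.sum_mem _ fun j _ => ?_
  have hminor : (N.submatrix Fin.succ j.succAbove).det = C (B.submatrix id j.succAbove).det := by
    rw [RingHom.map_det]
    congr 1
    ext i k
    simp [hB]
  rw [hminor, show (-1) ^ (j : ℕ) * N 0 j * C (B.submatrix id j.succAbove).det =
      ((-1) ^ (j : ℕ) * (B.submatrix id j.succAbove).det) • N 0 j by simp [smul_eq_C_mul]; ring]
  exact M.smul_mem _ (h0 j)

theorem eval_det_evalMatrix_cons {m : ℕ} (Q : Fin (m + 1) → R[X]) (x' : Fin m → R) (r : R) :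
    (evalMatrix (fun j => (Q j).map C) (Fin.cons X (C ∘ x'))).det.eval r =
      (evalMatrix Q (Fin.cons r x')).det := by
  rw [← coe_evalRingHom, RingHom.map_det, RingHom.mapMatrix_apply, map_evalMatrix]
  congr 1
  ext i j
  have hmap : ∀ q : R[X], (q.map C).map (evalRingHom r) = q := fun q => by ext; simp
  refine Fin.cases ?_ (fun i => ?_) i <;> simp [hmap]

theorem exists_det_evalMatrix_cons_eq [IsDomain R] {m : ℕ} {c : R} {Q : Fin (m + 1) → R[X]}
    (hQ : ∀ j, Q j ∈ theta (m + 1) c) {x' : Fin m → R} (hx' : Function.Injective x') :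
    ∃ β, ∀ r, (evalMatrix Q (Fin.cons r x')).det =
      β * ((∏ i, (r - x' i)) * (1 - c * (∏ i, x' i) * r)) := by
  set F := (evalMatrix (fun j => (Q j).map C) (Fin.cons X (C ∘ x'))).det
  have hF : F ∈ theta (#(univ : Finset (Fin m)) + 1) c := by
    rw [card_univ, Fintype.card_fin]
    refine det_mem_of_row_zero_mem _ (evalMatrix Q x') (fun j => ?_) fun i j => ?_
    · simpa [eval_map] using hQ j
    · simp [eval_map, eval₂_at_apply]
  have hroots : ∀ i ∈ univ, F.IsRoot (x' i) := by
    intro i _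
    rw [IsRoot, eval_det_evalMatrix_cons]
    exact Matrix.det_zero_of_row_eq (Fin.succ_ne_zero i).symm (by ext; simp)
  obtain ⟨β, hβ⟩ := exists_eq_C_mul_of_mem_theta hF hx'.injOn hroots
  refine ⟨β, fun r => ?_⟩
  rw [← eval_det_evalMatrix_cons Q x' r]
  change F.eval r = _
  rw [hβ]
  simp [eval_prod, mul_assoc]

noncomputable def thetaCol (P : Fin n → R[X]) (a : Fin n → R) (j : Fin n) : R[X] :=
  P j * ∏ k ∈ Ioi j, (1 - C (a k) * X)

@[simp]
theorem eval_thetaCol (P : Fin n → R[X]) (a : Fin n → R) (j : Fin n) (r : R) :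
    (thetaCol P a j).eval r = (P j).eval r * ∏ k ∈ Ioi j, (1 - a k * r) := by
  simp [thetaCol, eval_prod]

theorem thetaCol_mem_theta {P : Fin n → R[X]} {a : Fin n → R} {t : R} {j : Fin n}
    (hP : P j ∈ theta (j + 1) (t * ∏ k ∈ Iic j, a k)) :
    thetaCol P a j ∈ theta n (t * ∏ k, a k) := by
  have h := mul_mem_theta hP (prod_one_sub_C_mul_X_mem_theta (Ioi j) a)
  rwa [Fin.card_Ioi, show j + 1 + (n - 1 - j) = n by omega, mul_assoc,
    Fin.prod_Iic_mul_prod_Ioi] at h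

theorem thetaCol_castSucc (P : Fin (m + 1) → R[X]) (a : Fin (m + 1) → R) (j : Fin m) :
    thetaCol P a j.castSucc = (1 - C (a (Fin.last m)) * X) *
      thetaCol (fun j => P j.castSucc) (fun k => a k.castSucc) j := by
  rw [thetaCol, thetaCol, Fin.prod_Ioi_castSucc]
  ring

theorem det_evalMatrix_thetaCol_cons_of_mul_eq_one (P : Fin (m + 1) → R[X])
    {a : Fin (m + 1) → R} {b : R} (hab : a (Fin.last m) * b = 1) (x' : Fin m → R) :
    (evalMatrix (thetaCol P a) (Fin.cons b x')).det =
      (-1) ^ m * (P (Fin.last m)).eval b * ((∏ i, (1 - a (Fin.last m) * x' i)) *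
        (evalMatrix (thetaCol (fun j => P j.castSucc) (fun k => a k.castSucc)) x').det) := by
  rw [Matrix.det_succ_row_zero, sum_eq_single (Fin.last m)]
  · have hminor : (evalMatrix (thetaCol P a) (Fin.cons b x')).submatrix Fin.succ
        (Fin.last m).succAbove = Matrix.of fun i j => (1 - a (Fin.last m) * x' i) *
          evalMatrix (thetaCol (fun j => P j.castSucc) (fun k => a k.castSucc)) x' i j := by
      ext i j
      simp [thetaCol_castSucc]
    rw [hminor, Matrix.det_mul_column]
    simp [Ioi_eq_empty.2 fun k _ => Fin.le_last k]
  · intro j _ hj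
    have hlast : Fin.last m ∈ Ioi j := mem_Ioi.2 (Fin.lt_last_iff_ne_last.2 hj)
    simp only [evalMatrix_apply, Fin.cons_zero, eval_thetaCol]
    rw [prod_eq_zero hlast (by rw [hab, sub_self])]
    simp
  · simp

theorem one_sub_mul_prod_mul_prod_ne_zero {ι : Type*} [Fintype ι] {t : R} (ht : t ≠ 1)
    (a : ι → R) {x : ι → R} (hx : ∀ i, ¬IsUnit (x i)) :
    1 - t * (∏ i, a i) * ∏ i, x i ≠ 0 := by
  rcases isEmpty_or_nonempty ι with hι | ⟨⟨i⟩⟩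
  · simpa using sub_ne_zero.2 ht.symm
  · rw [sub_ne_zero]
    intro h
    exact hx i (isUnit_of_dvd_one ((dvd_prod_of_mem x (mem_univ i)).trans
      (Dvd.intro_left _ h.symm)))

theorem one_sub_mul_det_evalMatrix_thetaCol_cons_inv_last {t : R} (P : Fin (m + 1) → R[X])
    (a : Fin (m + 1) → Rˣ) (x' : Fin m → R)
    (hIH : (1 - t) * (evalMatrix (thetaCol (fun j => P j.castSucc)
        fun k => (a k.castSucc : R)) x').det =
      (1 - t * (∏ i : Fin m, (a i.castSucc : R)) * ∏ i, x' i) *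
        (∏ i : Fin m, (P i.castSucc).eval ↑(a i.castSucc)⁻¹) *
          (∏ i : Fin m, (a i.castSucc : R) ^ (i : ℕ)) * ∏ i, ∏ j ∈ Ioi i, (x' j - x' i)) :
    (1 - t) *
        (evalMatrix (thetaCol P fun k => (a k : R)) (Fin.cons ↑(a (Fin.last m))⁻¹ x')).det =
      (-1) ^ m * (∏ i, (P i).eval ↑(a i)⁻¹) * (∏ i, (a i : R) ^ (i : ℕ)) *
        (∏ i, ∏ j ∈ Ioi i, (x' j - x' i)) * ((∏ i, (↑(a (Fin.last m))⁻¹ - x' i)) *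
          (1 - t * (∏ i : Fin m, (a i.castSucc : R)) * ∏ i, x' i)) := by
  rw [det_evalMatrix_thetaCol_cons_of_mul_eq_one P (a := fun k => (a k : R))
    (Units.mul_inv (a (Fin.last m))) x', Fin.prod_univ_castSucc (fun i => (P i).eval _),
    Fin.prod_univ_castSucc (fun i => (a i : R) ^ (i : ℕ))]
  set L : R := ↑(a (Fin.last m))
  set L' : R := ↑(a (Fin.last m))⁻¹
  have hLL' : L * L' = 1 := Units.mul_inv _
  have hprod : ∏ i, (1 - L * x' i) = L ^ m * ∏ i, (L' - x' i) := by
    rw [← Fin.prod_const, ← prod_mul_distrib]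
    exact prod_congr rfl fun i _ => by linear_combination (-1 : R) * hLL'
  rw [hprod]
  simp only [Fin.val_last, Fin.val_castSucc]
  linear_combination ((-1) ^ m * (P (Fin.last m)).eval L' * L ^ m * ∏ i, (L' - x' i)) * hIH

theorem one_sub_mul_det_evalMatrix_thetaCol_of_injective [IsDomain R] {t : R} (ht : t ≠ 1)
    (P : Fin n → R[X]) (a : Fin n → Rˣ)
    (hP : ∀ j : Fin n, P j ∈ theta (j + 1) (t * ∏ k ∈ Iic j, (a k : R)))
    {x : Fin n → R} (hx : Function.Injective x) (hxu : ∀ i, ¬IsUnit (x i)) :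
    (1 - t) * (evalMatrix (thetaCol P fun k => (a k : R)) x).det =
      (1 - t * (∏ i, (a i : R)) * ∏ i, x i) * (∏ i, (P i).eval ↑(a i)⁻¹) *
        (∏ i, (a i : R) ^ (i : ℕ)) * ∏ i, ∏ j ∈ Ioi i, (x j - x i) := by
  induction n with
  | zero => simp
  | succ m ih =>
    obtain ⟨x₀, x', rfl⟩ : ∃ x₀ x', x = Fin.cons x₀ x' :=
      ⟨x 0, Fin.tail x, (Fin.cons_self_tail x).symm⟩
    have hx' : Function.Injective x' := hx.comp (Fin.succ_injective _)
    obtain ⟨β, hβ⟩ := exists_det_evalMatrix_cons_eq (fun j => thetaCol_mem_theta (hP j)) hx'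
    have hlast := one_sub_mul_det_evalMatrix_thetaCol_cons_inv_last P a x'
      (ih _ _ (fun j => by simpa [Fin.prod_Iic_castSucc] using hP j.castSucc) hx'
        fun i => hxu i.succ)
    have hA : ∏ i, (a i : R) = (∏ i : Fin m, (a i.castSucc : R)) * a (Fin.last m) :=
      Fin.prod_univ_castSucc _
    have hLL' := Units.mul_inv (a (Fin.last m))
    have hK : (∏ i, (↑(a (Fin.last m))⁻¹ - x' i)) *
        (1 - t * (∏ i : Fin m, (a i.castSucc : R)) * ∏ i, x' i) ≠ 0 :=
      mul_ne_zero (prod_ne_zero_iff.2 fun i _ => sub_ne_zero.2 fun h =>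
        hxu i.succ (by simp [← h]))
        (one_sub_mul_prod_mul_prod_ne_zero ht _ fun i => hxu i.succ)
    have hβ' : (1 - t) * β = (-1) ^ m * (∏ i, (P i).eval ↑(a i)⁻¹) *
        (∏ i, (a i : R) ^ (i : ℕ)) * ∏ i : Fin m, ∏ j ∈ Ioi i, (x' j - x' i) := by
      refine mul_right_cancel₀ hK ?_
      rw [← hlast, hβ, hA]
      linear_combination (1 - t) * β * (∏ i, (↑(a (Fin.last m))⁻¹ - x' i)) * t *
        (∏ i : Fin m, (a i.castSucc : R)) * (∏ i, x' i) * hLL'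
    rw [hβ, Fin.prod_cons, Fin.prod_prod_Ioi_sub_cons]
    linear_combination
      ((∏ j, (x₀ - x' j)) * (1 - t * (∏ i, (a i : R)) * x₀ * ∏ i, x' i)) * hβ'

theorem one_sub_mul_det_evalMatrix_thetaCol {K : Type*} [CommRing K] [IsDomain K] {t : K}
    (ht : t ≠ 1) (P : Fin n → K[X]) (a : Fin n → Kˣ)
    (hP : ∀ j : Fin n, P j ∈ theta (j + 1) (t * ∏ k ∈ Iic j, (a k : K))) (x : Fin n → K) :
    (1 - t) * (evalMatrix (thetaCol P fun k => (a k : K)) x).det =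
      (1 - t * (∏ i, (a i : K)) * ∏ i, x i) * (∏ i, (P i).eval ↑(a i)⁻¹) *
        (∏ i, (a i : K) ^ (i : ℕ)) * ∏ i, ∏ j ∈ Ioi i, (x j - x i) := by
  have hgen := one_sub_mul_det_evalMatrix_thetaCol_of_injective (t := MvPolynomial.C t)
    (by rwa [Ne, ← map_one MvPolynomial.C, MvPolynomial.C_inj])
    (fun j => (P j).map MvPolynomial.C)
    (fun i => (a i).map (MvPolynomial.C : K →+* MvPolynomial (Fin n) K).toMonoidHom)
    (fun j => by simpa using map_mem_theta MvPolynomial.C (hP j)) MvPolynomial.X_injective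
    (fun i h => by simpa using h.map (MvPolynomial.eval 0))
  have heval : ∀ (p : K[X]) (y : MvPolynomial (Fin n) K),
      MvPolynomial.eval x ((p.map MvPolynomial.C).eval y) = p.eval (MvPolynomial.eval x y) := by
    intro p y
    rw [eval_map, hom_eval₂]
    congr 1
    ext
    simp
  have hmat : (evalMatrix (thetaCol (fun j => (P j).map MvPolynomial.C)
      fun k => MvPolynomial.C (a k : K)) MvPolynomial.X).map (MvPolynomial.eval x) =
      evalMatrix (thetaCol P fun k => (a k : K)) x := by
    ext i j
    simp [heval]
  simpa [RingHom.map_det, heval, hmat] using congrArg (MvPolynomial.eval x) hgen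

end Polynomial

theorem stmt_15_general (n : ℕ)
    (x a : Fin n → ℂ) (ha : ∀ i, a i ≠ 0) (t : ℂ) (ht : t ≠ 1)
    (P : Fin n → Polynomial ℂ)
    (hdeg : ∀ j : Fin n, (P j).natDegree ≤ j.val + 1)
    (hnorm : ∀ j : Fin n, (P j).coeff (j.val + 1) =
      (-1) ^ (j.val + 1) * (t * ∏ k ∈ Finset.Iic j, a k) * (P j).coeff 0) :
    Matrix.det (Matrix.of fun i j : Fin n =>
      (P j).eval (x i) * ∏ k ∈ Finset.Ioi j, (1 - a k * x i))
    = (1 - t * (∏ i, a i) * ∏ i, x i) / (1 - t) *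
        (∏ i, (P i).eval (1 / a i)) *
        ∏ i : Fin n, ∏ j ∈ Finset.Ioi i, a j * (x j - x i) := by
  have h := one_sub_mul_det_evalMatrix_thetaCol ht P (fun i => Units.mk0 (a i) (ha i))
    (fun j => ⟨hdeg j, hnorm j⟩) x
  have hmat : evalMatrix (thetaCol P a) x =
      Matrix.of fun i j => (P j).eval (x i) * ∏ k ∈ Ioi j, (1 - a k * x i) := by
    ext i j
    simp
  simp only [Units.val_mk0, Units.val_inv_eq_inv_val, hmat] at h
  rw [prod_congr rfl fun i _ => prod_mul_distrib, prod_mul_distrib,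
    Fin.prod_prod_Ioi_eq_prod_pow, div_mul_eq_mul_div, div_mul_eq_mul_div,
    eq_div_iff (sub_ne_zero.2 ht.symm)]
  simp only [one_div]
  linear_combination h

theorem stmt_15 (n : ℕ) (hn : 1 ≤ n)
    (x a : Fin n → ℂ) (ha : ∀ i, a i ≠ 0) (t : ℂ) (ht : t ≠ 1)
    (P : Fin n → Polynomial ℂ)
    (hdeg : ∀ j : Fin n, (P j).natDegree ≤ j.val + 1)
    (hnorm : ∀ j : Fin n, (P j).coeff (j.val + 1) =
      (-1) ^ (j.val + 1) * (t * ∏ k ∈ Finset.Iic j, a k) * (P j).coeff 0) :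
    Matrix.det (Matrix.of fun i j : Fin n =>
      (P j).eval (x i) * ∏ k ∈ Finset.Ioi j, (1 - a k * x i))
    = (1 - t * (∏ i, a i) * ∏ i, x i) / (1 - t) *
        (∏ i, (P i).eval (1 / a i)) *
        ∏ i : Fin n, ∏ j ∈ Finset.Ioi i, a j * (x j - x i) :=
  stmt_15_general n x a ha t ht P hdeg hnorm
end

section
/- Let n ≥ 1 be an integer, x_1,…,x_n ∈ ℂ, and a_1,…,a_n ∈ ℂ nonzero. For each j = 1,…,n let P_{j−1} be a complex polynomial of degree at most j−1. Then det_{1≤i,j≤n}( P_{j−1}(x_i) · ∏_{k=j+1}^{n} (1 − a_k x_i) ) = ∏_{i=1}^{n} P_{i−1}(1/a_i) · ∏_{1≤i<j≤n} a_j (x_j − x_i). -/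
open Finset Polynomial

private noncomputable def EE {n : ℕ} (a : Fin n → ℂ) (l : Fin n) : ℂ[X] :=
  ∏ k ∈ Finset.Ioi l, (1 - C (a k) * X)

private lemma fin_prod_rev {M : Type*} [CommMonoid M] {n : ℕ} (f : Fin n → M) :
    ∏ i, f (Fin.rev i) = ∏ i, f i :=
  Fintype.prod_bijective Fin.rev Fin.rev_bijective _ _ (fun _ => rfl)

private lemma prod_Ioi_rev {M : Type*} [CommMonoid M] {n : ℕ} (f : Fin n → M) (l : Fin n) :
    ∏ k ∈ Finset.Ioi (Fin.rev l), f k = ∏ k ∈ Finset.Iio l, f (Fin.rev k) := by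
  refine Finset.prod_nbij' Fin.rev Fin.rev ?_ ?_ ?_ ?_ ?_ <;>
    simp [Fin.rev_lt_rev, Fin.lt_rev_iff, Fin.rev_lt_iff, Fin.rev_rev]

private lemma EE_succ {n : ℕ} (a : Fin n → ℂ) (i' i : Fin n) (h : i'.val + 1 = i.val) :
    EE a i' = (1 - C (a i) * X) * EE a i := by
  have hins : Finset.Ioi i' = insert i (Finset.Ioi i) := by
    ext k
    simp only [Finset.mem_Ioi, Finset.mem_insert, Fin.lt_def]
    constructor
    · intro hk
      rcases eq_or_lt_of_le (by omega : i.val ≤ k.val) with h1 | h1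
      · left; exact (Fin.ext h1.symm)
      · right; exact h1
    · rintro (rfl | hk) <;> omega
  rw [EE, EE, hins, Finset.prod_insert (by simp)]

private lemma keyA {n : ℕ} (a : Fin n → ℂ) (ha : ∀ i, a i ≠ 0) (j : ℕ) :
    ∀ (hj : j < n) (P : ℂ[X]), P.natDegree ≤ j →
    ∃ c : Fin n → ℂ,
      c ⟨j, hj⟩ = P.eval (a ⟨j, hj⟩)⁻¹ ∧
      (∀ m : Fin n, j < m.val → c m = 0) ∧
      P * EE a ⟨j, hj⟩ = ∑ m, C (c m) * EE a m := by
  induction j with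
  | zero =>
    intro hj P hP
    set i0 : Fin n := ⟨0, hj⟩
    have hPc : P = C (P.eval (a i0)⁻¹) := by
      conv_lhs => rw [Polynomial.eq_C_of_natDegree_le_zero hP]
      rw [Polynomial.eq_C_of_natDegree_le_zero hP]; simp
    refine ⟨Pi.single i0 (P.eval (a i0)⁻¹), by simp, ?_, ?_⟩
    · intro m hm
      apply Pi.single_eq_of_ne
      intro h; rw [h] at hm; simp [i0] at hm
    · rw [Finset.sum_eq_single i0]
      · rw [Pi.single_eq_same, ← hPc]
      · intro m _ hm; rw [Pi.single_eq_of_ne hm]; simp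
      · simp
  | succ j ih =>
    intro hj P hP
    set i : Fin n := ⟨j + 1, hj⟩ with hi
    have hj' : j < n := by omega
    set i' : Fin n := ⟨j, hj'⟩ with hi'
    set r : ℂ := P.eval (a i)⁻¹ with hr
    obtain ⟨S, hS⟩ := Polynomial.X_sub_C_dvd_sub_C_eval (a := (a i)⁻¹) (p := P)
    have hSdeg : S.natDegree ≤ j := by
      rcases eq_or_ne S 0 with rfl | hS0
      · simp
      · have h1 : (P - C r).natDegree ≤ j + 1 := by
          refine le_trans (Polynomial.natDegree_sub_le _ _) ?_
          simp [hP]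
        rw [hS, Polynomial.natDegree_mul (Polynomial.X_sub_C_ne_zero _) hS0,
          Polynomial.natDegree_X_sub_C] at h1
        omega
    have hfac : C (-(a i)⁻¹) * (1 - C (a i) * X) = X - C (a i)⁻¹ := by
      rw [mul_one_sub, ← mul_assoc, ← C_mul, neg_mul, inv_mul_cancel₀ (ha i)]
      simp only [map_neg, map_one]
      ring
    obtain ⟨c', hc1, hc2, hc3⟩ := ih hj' (C (-(a i)⁻¹) * S)
      (le_trans (Polynomial.natDegree_C_mul_le _ _) hSdeg)
    refine ⟨fun m => c' m + if m = i then r else 0, ?_, ?_, ?_⟩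
    · show c' i + (if i = i then r else 0) = r
      rw [hc2 i (by rw [hi]; simp), if_pos rfl, zero_add]
    · intro m hm
      show c' m + (if m = i then r else 0) = 0
      rw [hc2 m (by omega), if_neg (by intro h; rw [h, hi] at hm; simp at hm), add_zero]
    · have hP' : P = C r + (X - C (a i)⁻¹) * S := by
        rw [← hS]; ring
      have hEE : EE a i' = (1 - C (a i) * X) * EE a i := EE_succ a i' i rfl
      have key : P * EE a i = C r * EE a i + (C (-(a i)⁻¹) * S) * EE a i' := by
        rw [hEE]
        conv_lhs => rw [hP']
        rw [← hfac]
        ring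
      rw [key, hc3]
      simp_rw [C_add, add_mul, Finset.sum_add_distrib, apply_ite C, map_zero, ite_mul,
        zero_mul, Finset.sum_ite_eq', Finset.mem_univ, if_true]
      ring
  
theorem stmt_16 (n : ℕ) (hn : 1 ≤ n)
    (x : Fin n → ℂ) (a : Fin n → ℂ) (ha : ∀ i, a i ≠ 0)
    (P : Fin n → Polynomial ℂ)
    (hdeg : ∀ j : Fin n, (P j).natDegree ≤ j.val) :
    Matrix.det (Matrix.of fun i j : Fin n =>
      (P j).eval (x i) * ∏ k ∈ Finset.Ioi j, (1 - a k * x i))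
    = (∏ i, (P i).eval (1 / a i)) *
        ∏ i : Fin n, ∏ j ∈ Finset.Ioi i, a j * (x j - x i) := by
  classical
  set N : Matrix (Fin n) (Fin n) ℂ :=
    Matrix.of (fun i l : Fin n => ∏ k ∈ Finset.Ioi l, (1 - a k * x i)) with hN
  have hchoice := fun j : Fin n => (keyA a ha j.val j.isLt (P j) (hdeg j)).choose_spec
  set D : Matrix (Fin n) (Fin n) ℂ :=
    fun m j => (keyA a ha j.val j.isLt (P j) (hdeg j)).choose m with hDdef
  have hD1 : ∀ j : Fin n, D j j = (P j).eval (a j)⁻¹ := by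
    intro j
    have := (hchoice j).1
    simpa using this
  have hD2 : ∀ m j : Fin n, j < m → D m j = 0 := fun m j h => (hchoice j).2.1 m h
  have hD3 : ∀ j : Fin n, P j * EE a j = ∑ m, C (D m j) * EE a m := by
    intro j
    have := (hchoice j).2.2
    simpa using this
  have hEEeval : ∀ (l : Fin n) (y : ℂ),
      (EE a l).eval y = ∏ k ∈ Finset.Ioi l, (1 - a k * y) := by
    intro l y
    rw [EE, Polynomial.eval_prod]
    exact Finset.prod_congr rfl fun k _ => by simp
  have hM : Matrix.of (fun i j : Fin n =>
      (P j).eval (x i) * ∏ k ∈ Finset.Ioi j, (1 - a k * x i)) = N * D := by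
    ext i j
    rw [Matrix.mul_apply, Matrix.of_apply]
    calc (P j).eval (x i) * ∏ k ∈ Finset.Ioi j, (1 - a k * x i)
        = ((P j) * EE a j).eval (x i) := by rw [Polynomial.eval_mul, hEEeval]
      _ = (∑ m, C (D m j) * EE a m).eval (x i) := by rw [hD3]
      _ = ∑ m, D m j * (EE a m).eval (x i) := by
          rw [Polynomial.eval_finset_sum]
          exact Finset.sum_congr rfl fun m _ => by simp
      _ = ∑ m, N i m * D m j := by
          refine Finset.sum_congr rfl fun m _ => ?_
          rw [hEEeval, mul_comm, hN, Matrix.of_apply]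
  have hdetD : D.det = ∏ j, (P j).eval (a j)⁻¹ := by
    rw [Matrix.det_of_upperTriangular (fun m j h => hD2 m j h)]
    exact Finset.prod_congr rfl fun j _ => hD1 j
  -- compute det N
  set q : Fin n → ℂ[X] := fun l => ∏ k ∈ Finset.Iio l, (X - C (a (Fin.rev k))⁻¹) with hqdef
  have hqmonic : ∀ l, (q l).Monic :=
    fun l => Polynomial.monic_prod_of_monic _ _ fun k _ => Polynomial.monic_X_sub_C _
  have hqdeg : ∀ l : Fin n, (q l).natDegree = l.val := by
    intro l
    rw [hqdef]
    rw [Polynomial.natDegree_prod _ _ (fun k _ => Polynomial.X_sub_C_ne_zero _)]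
    simp [Polynomial.natDegree_X_sub_C]
  set V : Matrix (Fin n) (Fin n) ℂ :=
    Matrix.of (fun i l : Fin n => (q l).eval (x (Fin.rev i))) with hV
  have hNsub : N.submatrix Fin.rev Fin.rev = Matrix.of (fun i l : Fin n =>
      (∏ k ∈ Finset.Iio l, (-a (Fin.rev k))) * V i l) := by
    ext i l
    rw [Matrix.submatrix_apply, hN, Matrix.of_apply, Matrix.of_apply,
      prod_Ioi_rev (fun k => 1 - a k * x (Fin.rev i)) l, hV, Matrix.of_apply, hqdef,
      Polynomial.eval_prod, ← Finset.prod_mul_distrib]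
    refine Finset.prod_congr rfl fun k _ => ?_
    rw [Polynomial.eval_sub, Polynomial.eval_X, Polynomial.eval_C]
    ring_nf
    rw [mul_inv_cancel₀ (ha (Fin.rev k))]
    ring
  have hdetN : N.det = ∏ i : Fin n, ∏ j ∈ Finset.Ioi i, (a j * (x j - x i)) := by
    have h0 : N.det = (N.submatrix Fin.rev Fin.rev).det := by
      rw [show (Fin.rev : Fin n → Fin n) = ⇑Fin.revPerm from rfl,
        Matrix.det_submatrix_equiv_self]
    rw [h0, hNsub]
    rw [show Matrix.of (fun i l : Fin n => (∏ k ∈ Finset.Iio l, (-a (Fin.rev k))) * V i l)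
        = Matrix.of (fun i l : Fin n => (fun l' => ∏ k ∈ Finset.Iio l', (-a (Fin.rev k))) l
            * V i l) from rfl]
    rw [Matrix.det_mul_row]
    rw [hV, ← Matrix.det_eval_matrixOfPolynomials_eq_det_vandermonde
      (fun i => x (Fin.rev i)) q hqdeg hqmonic]
    rw [Matrix.det_vandermonde]
    have hA : ∏ l : Fin n, ∏ k ∈ Finset.Iio l, (-a (Fin.rev k))
        = ∏ l : Fin n, ∏ k ∈ Finset.Ioi l, (-a k) := by
      rw [← fin_prod_rev (fun l => ∏ k ∈ Finset.Iio l, (-a (Fin.rev k)))]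
      refine Finset.prod_congr rfl fun l _ => ?_
      rw [← prod_Ioi_rev (fun k => -a k) (Fin.rev l), Fin.rev_rev]
    have hX : ∏ i : Fin n, ∏ j ∈ Finset.Ioi i, (x (Fin.rev j) - x (Fin.rev i))
        = ∏ i : Fin n, ∏ j ∈ Finset.Iio i, (x j - x i) := by
      rw [← fin_prod_rev (fun i => ∏ j ∈ Finset.Ioi i, (x (Fin.rev j) - x (Fin.rev i)))]
      refine Finset.prod_congr rfl fun i _ => ?_
      rw [prod_Ioi_rev (fun j => x (Fin.rev j) - x (Fin.rev (Fin.rev i))) i]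
      simp [Fin.rev_rev]
    have hswap : ∏ i : Fin n, ∏ j ∈ Finset.Iio i, (x j - x i)
        = ∏ j : Fin n, ∏ i ∈ Finset.Ioi j, (x j - x i) :=
      Finset.prod_comm' (fun i j => by simp [and_comm])
    rw [hA, hX, hswap, ← Finset.prod_mul_distrib]
    refine Finset.prod_congr rfl fun i _ => ?_
    rw [← Finset.prod_mul_distrib]
    exact Finset.prod_congr rfl fun j _ => by ring
  rw [hM, Matrix.det_mul, hdetN, hdetD, mul_comm]
  simp only [one_div]
end

section
/- Let n ≥ 1 be an integer, let x_1,…,x_n be nonzero complex numbers, and let c_1,…,c_{n+1} ∈ ℂ. For each j = 1,…,n let P_{j−1} be a complex polynomial of degree at most j−1. Then det_{1≤i,j≤n}( x_i^{−j} ∏_{k=1}^{n+1} (1 − c_k x_i) · P_{j−1}(x_i) − x_i^{j} ∏_{k=1}^{n+1} (1 − c_k/x_i) · P_{j−1}(1/x_i) ) = ∏_{i=1}^{n} P_{i−1}(0) · ∏_{1≤i<j≤n+1} (1 − c_i c_j) · ∏_{i=1}^{n} x_i^{−n} (1 − x_i^2) · ∏_{1≤i<j≤n} (x_i − x_j)(1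 − x_i x_j). -/
/-!
Write `E(z) = ∏ₖ (1 - cₖ z)`. Expanding `P_j` in monomials factors the matrix as `F · U`, where
`F i t = x_i^{-(t+1)} E(x_i) - x_i^{t+1} E(1/x_i)` and `U` is upper triangular with diagonal
`P_j(0)`. Expanding `E` in monomials factors `F = H · B`, where `H i m = x_i^{m+1} - x_i^{-(m+1)}`
and `B m t = e_{t+m+2} - e_{t-m}` involves only the coefficients `e_s` of `E`. Since
`x^{m+1} - x^{-(m+1)} = (x - x⁻¹) S_m(x + x⁻¹)` for the monic Chebyshev polynomials `S_m`, `det H`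
is a Vandermonde determinant in the `x_i + x_i⁻¹`. To find `det B`, take `c` generic (the
variables of `ℤ[c₀, …, cₙ]`, in its fraction field) and `x_i = 1 / c_{i+1}`: then `E(x_i) = 0`, so
`F` is a rescaled Vandermonde matrix and `det B = det F / det H` can be read off. The identity for
`det B` then specializes to every commutative ring.
-/

open Finset Polynomial

namespace Polynomial.Chebyshev

variable {R : Type*} [CommRing R]

theorem degree_S_natCast [Nontrivial R] (n : ℕ) : (S R n).degree = n := by
  induction n using Nat.twoStepInduction with
  | zero => simp
  | one => simp
  | more n ih1 ih2 =>
    push_cast at ih2 ⊢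
    have hX : (X * S R (n + 1)).degree = ↑(n + 2) := by
      rw [mul_comm, degree_mul_X, ih2]; norm_cast
    rw [S_add_two, degree_sub_eq_left_of_degree_lt (by rw [ih1, hX]; norm_cast; omega), hX]
    norm_cast

theorem monic_S_natCast [Nontrivial R] (n : ℕ) : (S R n).Monic := by
  induction n using Nat.twoStepInduction with
  | zero => simp
  | one => simp
  | more n ih1 ih2 =>
    push_cast at ih2 ⊢
    rw [S_add_two]
    refine (monic_X.mul ih2).sub_of_left ?_
    have h := degree_S_natCast (R := R) (n + 1)
    push_cast at h
    rw [mul_comm, degree_mul_X, h, degree_S_natCast]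
    norm_cast; omega

theorem natDegree_S_natCast [Nontrivial R] (n : ℕ) : (S R n).natDegree = n :=
  natDegree_eq_of_degree_eq_some (degree_S_natCast n)

theorem sub_mul_S_eval_add {x y : R} (h : x * y = 1) (n : ℕ) :
    (x - y) * (S R n).eval (x + y) = x ^ (n + 1) - y ^ (n + 1) := by
  induction n using Nat.twoStepInduction with
  | zero => simp
  | one => simp; ring
  | more n ih1 ih2 =>
    push_cast at ih2 ⊢
    rw [S_add_two, eval_sub, eval_mul, eval_X]
    linear_combination (x + y) * ih2 - ih1 + (x ^ (n + 1) - y ^ (n + 1)) * h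

end Polynomial.Chebyshev

namespace Fin

variable {M : Type*} [CommMonoid M]

theorem prod_prod_eq_prod_diag_mul_sq : ∀ {n : ℕ} (f : Fin n → Fin n → M),
    (∀ i j, f i j = f j i) → ∏ i, ∏ j, f i j = (∏ i, f i i) * (∏ i, ∏ j ∈ Ioi i, f i j) ^ 2
  | 0, _, _ => by simp
  | n + 1, f, hf => by
    have ih := prod_prod_eq_prod_diag_mul_sq (fun i j : Fin n => f i.succ j.succ) fun _ _ => hf _ _
    simp only [prod_univ_succ, prod_Ioi_zero, prod_Ioi_succ, prod_mul_distrib, ih]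
    simp only [hf _ 0, sq]
    ac_rfl

theorem prod_mul_prod_Ioi_mul_eq_prod_pow : ∀ {n : ℕ} (z : Fin n → M),
    (∏ i, z i) * ∏ i, ∏ j ∈ Ioi i, z i * z j = ∏ i, z i ^ n
  | 0, _ => by simp
  | n + 1, z => by
    have ih := prod_mul_prod_Ioi_mul_eq_prod_pow fun i : Fin n => z i.succ
    simp only [prod_univ_succ, prod_Ioi_zero, prod_Ioi_succ]
    calc _ = z 0 ^ (n + 1) * (((∏ i : Fin n, z i.succ) *
          ∏ i : Fin n, ∏ j ∈ Ioi i, z i.succ * z j.succ) * ∏ i : Fin n, z i.succ) := by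
          rw [prod_mul_distrib (f := fun _ => z 0), prod_const, pow_succ]
          ac_rfl
      _ = _ := by rw [ih, ← prod_mul_distrib]; simp only [← pow_succ]

end Fin

theorem zpow_sub_sub_zpow_eq_sum {K : Type*} [Field K] (x : K) {n k s : ℕ} (hk : k ≤ n)
    (hs : s ≤ k + n) :
    x ^ ((s : ℤ) - k) - x ^ ((k : ℤ) - s) = ∑ m : Fin n, (x ^ (m + 1 : ℕ) - x⁻¹ ^ (m + 1 : ℕ)) *
      ((if (s : ℤ) = k + m + 1 then 1 else 0) - if (s : ℤ) = k - m - 1 then 1 else 0) := by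
  have hpow : ∀ d : ℕ, x ^ (d : ℤ) - x ^ (-(d : ℤ)) = x ^ d - x⁻¹ ^ d := fun d => by
    rw [zpow_neg, zpow_natCast, inv_pow]
  rcases lt_trichotomy s k with h | rfl | h
  · rw [sum_eq_single ⟨k - s - 1, by omega⟩]
    · have e₁ : (s : ℤ) - k = -((k - s - 1 + 1 : ℕ) : ℤ) := by omega
      have e₂ : (k : ℤ) - s = ((k - s - 1 + 1 : ℕ) : ℤ) := by omega
      rw [if_neg (by omega), if_pos (by simp; omega), e₁, e₂, ← hpow]
      ring
    · intro m _ hm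
      rw [if_neg (by omega), if_neg (fun h => hm (Fin.ext (by simp; omega)))]
      ring
    · simp
  · simp only [sub_self, zpow_zero]
    refine (sum_eq_zero fun m _ => ?_).symm
    rw [if_neg (by omega), if_neg (by omega)]
    ring
  · rw [sum_eq_single ⟨s - k - 1, by omega⟩]
    · have e₁ : (s : ℤ) - k = ((s - k - 1 + 1 : ℕ) : ℤ) := by omega
      have e₂ : (k : ℤ) - s = -((s - k - 1 + 1 : ℕ) : ℤ) := by omega
      rw [if_pos (by simp; omega), if_neg (by omega), e₁, e₂, ← hpow]
      ring
    · intro m _ hm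
      rw [if_neg (fun h => hm (Fin.ext (by simp; omega))), if_neg (by omega)]
      ring
    · simp

namespace Polynomial

section CommRing

variable {R : Type*} [CommRing R]

noncomputable def intCoeff (Q : R[X]) (s : ℤ) : R := if 0 ≤ s then Q.coeff s.toNat else 0

theorem intCoeff_natCast (Q : R[X]) (s : ℕ) : Q.intCoeff s = Q.coeff s := by
  simp [intCoeff]

theorem intCoeff_eq_sum (Q : R[X]) {N : ℕ} (hQ : Q.natDegree < N) (s : ℤ) :
    Q.intCoeff s = ∑ r ∈ range N, Q.coeff r * if (r : ℤ) = s then 1 else 0 := by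
  simp only [mul_ite, mul_one, mul_zero]
  rcases le_or_gt 0 s with hs | hs
  · lift s to ℕ using hs
    simp only [intCoeff_natCast, Nat.cast_inj, sum_ite_eq', mem_range]
    split_ifs with h
    · rfl
    · exact coeff_eq_zero_of_natDegree_lt (by omega)
  · rw [intCoeff, if_neg (by omega), sum_ite_of_false fun r _ => by omega, sum_const_zero]

theorem intCoeff_map {S : Type*} [CommRing S] (φ : R →+* S) (Q : R[X]) (s : ℤ) :
    (Q.map φ).intCoeff s = φ (Q.intCoeff s) := by
  unfold intCoeff
  split_ifs <;> simp

noncomputable def prodOneSub {N : ℕ} (c : Fin N → R) : R[X] := ∏ k, (1 - C (c k) * X)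

theorem eval_prodOneSub {N : ℕ} (c : Fin N → R) (z : R) :
    (prodOneSub c).eval z = ∏ k, (1 - c k * z) := by
  simp [prodOneSub, eval_prod]

theorem natDegree_prodOneSub_le {N : ℕ} (c : Fin N → R) : (prodOneSub c).natDegree ≤ N := by
  have h : ∀ k, (1 - C (c k) * X).natDegree ≤ 1 := fun k => by compute_degree
  refine (natDegree_prod_le univ fun k => 1 - C (c k) * X).trans ?_
  simpa using sum_le_sum fun k (_ : k ∈ univ) => h k

theorem map_prodOneSub {S : Type*} [CommRing S] (φ : R →+* S) {N : ℕ} (c : Fin N → R) :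
    (prodOneSub c).map φ = prodOneSub fun k => φ (c k) := by
  simp [prodOneSub, Polynomial.map_prod]

end CommRing

variable {K : Type*} [Field K]

noncomputable def antisymmEval (Q : K[X]) (k : ℤ) (x : K) : K :=
  x ^ (-k) * Q.eval x - x ^ k * Q.eval x⁻¹

theorem antisymmEval_mul (Q P : K[X]) {N : ℕ} (hP : P.natDegree < N) (k : ℤ) {x : K}
    (hx : x ≠ 0) :
    (Q * P).antisymmEval k x = ∑ r ∈ range N, P.coeff r * Q.antisymmEval (k - r) x := by
  simp only [antisymmEval, eval_mul, eval_eq_sum_range' hP, mul_sum, ← sum_sub_distrib]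
  refine sum_congr rfl fun r _ => ?_
  rw [neg_sub, zpow_sub₀ hx, zpow_sub₀ hx, zpow_neg, zpow_natCast, inv_pow]
  field_simp

theorem antisymmEval_eq_sum_intCoeff (Q : K[X]) {n k : ℕ} (hk : k ≤ n)
    (hQ : Q.natDegree ≤ k + n) {x : K} (hx : x ≠ 0) :
    Q.antisymmEval k x = ∑ m : Fin n, (x ^ (m + 1 : ℕ) - x⁻¹ ^ (m + 1 : ℕ)) *
      (Q.intCoeff (k + m + 1) - Q.intCoeff (k - m - 1)) := by
  have hQ' : Q.natDegree < k + n + 1 := by omega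
  have h := antisymmEval_mul 1 Q hQ' k hx
  rw [one_mul] at h
  rw [h]
  simp only [antisymmEval, eval_one, mul_one, intCoeff_eq_sum Q hQ', ← sum_sub_distrib, mul_sum]
  rw [sum_comm]
  refine sum_congr rfl fun s hs => ?_
  rw [neg_sub, zpow_sub_sub_zpow_eq_sum x hk (by simp at hs; omega), mul_sum]
  refine sum_congr rfl fun m _ => ?_
  ring

end Polynomial

namespace Matrix

section CommRing

variable {R : Type*} [CommRing R] {n : ℕ}

noncomputable def hankelSubToeplitz (n : ℕ) (Q : R[X]) : Matrix (Fin n) (Fin n) R :=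
  of fun m t => Q.intCoeff (t + m + 2) - Q.intCoeff (t - m)

theorem hankelSubToeplitz_map {S : Type*} [CommRing S] (φ : R →+* S) (Q : R[X]) :
    (hankelSubToeplitz n Q).map φ = hankelSubToeplitz n (Q.map φ) := by
  ext m t
  simp [hankelSubToeplitz, intCoeff_map]

theorem map_det_hankelSubToeplitz_prodOneSub {S : Type*} [CommRing S] (φ : R →+* S)
    (c : Fin (n + 1) → R) :
    φ (hankelSubToeplitz n (prodOneSub c)).det =
      (hankelSubToeplitz n (prodOneSub fun k => φ (c k))).det := by
  rw [RingHom.map_det, RingHom.mapMatrix_apply, hankelSubToeplitz_map, map_prodOneSub]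

noncomputable def upperCoeffMatrix (P : Fin n → R[X]) : Matrix (Fin n) (Fin n) R :=
  of fun t j => if (t : ℕ) ≤ j then (P j).coeff (j - t) else 0

theorem det_upperCoeffMatrix (P : Fin n → R[X]) :
    (upperCoeffMatrix P).det = ∏ j, (P j).eval 0 := by
  rw [det_of_isUpperTriangular]
  · simp [upperCoeffMatrix, coeff_zero_eq_eval_zero]
  · intro t j h
    simp only [upperCoeffMatrix, of_apply, ite_eq_right_iff]
    intro h'
    exact absurd h' (by simpa using h)

end CommRing

section Field

variable {K : Type*} [Field K] {n : ℕ}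

noncomputable def symplecticVandermonde (x : Fin n → K) : Matrix (Fin n) (Fin n) K :=
  of fun i m => x i ^ (m + 1 : ℕ) - (x i)⁻¹ ^ (m + 1 : ℕ)

theorem symplecticVandermonde_inv (x : Fin n → K) :
    symplecticVandermonde (fun i => (x i)⁻¹) = -symplecticVandermonde x := by
  ext i m
  simp [symplecticVandermonde]

theorem det_symplecticVandermonde_eq_prod (x : Fin n → K) (hx : ∀ i, x i ≠ 0) :
    (symplecticVandermonde x).det = (∏ i, (x i - (x i)⁻¹)) *
      ∏ i, ∏ j ∈ Ioi i, ((x j + (x j)⁻¹) - (x i + (x i)⁻¹)) := by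
  have hS : symplecticVandermonde x = of fun i m =>
      (x i - (x i)⁻¹) * of (fun i (m : Fin n) => (Chebyshev.S K m).eval (x i + (x i)⁻¹)) i m := by
    ext i m
    exact (Chebyshev.sub_mul_S_eval_add (mul_inv_cancel₀ (hx i)) m).symm
  rw [hS, det_mul_column, ← det_eval_matrixOfPolynomials_eq_det_vandermonde _ _
    (fun m => Chebyshev.natDegree_S_natCast m) (fun m => Chebyshev.monic_S_natCast m),
    det_vandermonde]

theorem det_symplecticVandermonde (x : Fin n → K) (hx : ∀ i, x i ≠ 0) :
    (symplecticVandermonde x).det = (-1) ^ n * (∏ i, x i ^ (-(n : ℤ)) * (1 - x i ^ 2)) *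
      ∏ i, ∏ j ∈ Ioi i, (x i - x j) * (1 - x i * x j) := by
  have hdiag : ∀ i, x i - (x i)⁻¹ = -1 * ((x i)⁻¹ * (1 - x i ^ 2)) := fun i => by
    field_simp [hx i]; ring
  have hpair : ∀ i j, (x j + (x j)⁻¹) - (x i + (x i)⁻¹) =
      (x i)⁻¹ * (x j)⁻¹ * ((x i - x j) * (1 - x i * x j)) := fun i j => by
    field_simp [hx i, hx j]; ring
  have hpairs : ∏ i, ∏ j ∈ Ioi i, (x i)⁻¹ * (x j)⁻¹ * ((x i - x j) * (1 - x i * x j)) =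
      (∏ i, ∏ j ∈ Ioi i, (x i)⁻¹ * (x j)⁻¹) * ∏ i, ∏ j ∈ Ioi i, (x i - x j) * (1 - x i * x j) := by
    simp only [← prod_mul_distrib]
  have hpow : ∏ i, x i ^ (-(n : ℤ)) * (1 - x i ^ 2) = (∏ i, (x i)⁻¹ ^ n) * ∏ i, (1 - x i ^ 2) := by
    simp only [_root_.zpow_neg, zpow_natCast, inv_pow, prod_mul_distrib]
  rw [det_symplecticVandermonde_eq_prod x hx]
  simp only [hdiag, hpair]
  rw [hpairs, hpow, ← Fin.prod_mul_prod_Ioi_mul_eq_prod_pow, prod_mul_distrib, prod_mul_distrib,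
    prod_const, card_univ, Fintype.card_fin]
  ring

noncomputable def antisymmEvalMatrix (Q : K[X]) (x : Fin n → K) : Matrix (Fin n) (Fin n) K :=
  of fun i t => Q.antisymmEval (t + 1) (x i)

theorem antisymmEvalMatrix_eq_mul (Q : K[X]) (hQ : Q.natDegree ≤ n + 1) (x : Fin n → K)
    (hx : ∀ i, x i ≠ 0) :
    antisymmEvalMatrix Q x = symplecticVandermonde x * hankelSubToeplitz n Q := by
  ext i t
  have h := Q.antisymmEval_eq_sum_intCoeff (k := t + 1) (n := n) t.isLt (by omega) (hx i)
  push_cast at h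
  simp only [antisymmEvalMatrix, mul_apply, of_apply, symplecticVandermonde, hankelSubToeplitz, h]
  refine sum_congr rfl fun m _ => ?_
  congr 3 <;> ring

theorem of_antisymmEval_mul_eq_antisymmEvalMatrix_mul (Q : K[X]) (P : Fin n → K[X])
    (hP : ∀ j, (P j).natDegree ≤ j) (x : Fin n → K) (hx : ∀ i, x i ≠ 0) :
    (of fun i j : Fin n => (Q * P j).antisymmEval (j + 1) (x i)) =
      antisymmEvalMatrix Q x * upperCoeffMatrix P := by
  ext i j
  have hfilter : (range n).filter (· ≤ (j : ℕ)) = range (j + 1) := by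
    ext t; simp only [mem_filter, mem_range]; omega
  simp only [of_apply, mul_apply, antisymmEvalMatrix, upperCoeffMatrix, mul_ite, mul_zero]
  rw [antisymmEval_mul Q (P j) (Nat.lt_succ_of_le (hP j)) _ (hx i),
    Fin.sum_univ_eq_sum_range (fun t => if t ≤ (j : ℕ) then
      Q.antisymmEval (t + 1) (x i) * (P j).coeff (j - t) else 0), ← sum_filter, hfilter,
    ← sum_range_reflect]
  refine sum_congr rfl fun t ht => ?_
  have htj : t ≤ j := by simp at ht; omega
  rw [mul_comm, Nat.succ_sub_one]
  congr 2
  push_cast [Nat.cast_sub htj]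
  ring

theorem det_antisymmEvalMatrix_prodOneSub_inv (c : Fin (n + 1) → K)
    (hc : ∀ i : Fin n, c i.succ ≠ 0) :
    (antisymmEvalMatrix (prodOneSub c) fun i : Fin n => (c i.succ)⁻¹).det =
      (symplecticVandermonde fun i : Fin n => c i.succ).det *
        ∏ α, ∏ β ∈ Ioi α, (1 - c α * c β) := by
  have hE : ∀ z, (prodOneSub c).eval z = (1 - c 0 * z) * ∏ j : Fin n, (1 - c j.succ * z) :=
    fun z => by rw [eval_prodOneSub, Fin.prod_univ_succ]
  have hroot : ∀ i : Fin n, (prodOneSub c).eval (c i.succ)⁻¹ = 0 := fun i => by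
    rw [hE]
    exact mul_eq_zero_of_right _
      (prod_eq_zero (mem_univ i) (by rw [mul_inv_cancel₀ (hc i), sub_self]))
  have hF : antisymmEvalMatrix (prodOneSub c) (fun i => (c i.succ)⁻¹) = of fun i t =>
      -(c i.succ)⁻¹ * (prodOneSub c).eval (c i.succ) *
        vandermonde (fun i => (c i.succ)⁻¹) i t := by
    ext i t
    simp only [antisymmEvalMatrix, antisymmEval, of_apply, vandermonde_apply, hroot, inv_inv,
      mul_zero, zero_sub]
    rw [show ((t : ℤ) + 1) = ((t + 1 : ℕ) : ℤ) by push_cast; ring, zpow_natCast, pow_succ]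
    ring
  have hdiag : ∀ i : Fin n,
      c i.succ - (c i.succ)⁻¹ = -(c i.succ)⁻¹ * (1 - c i.succ * c i.succ) :=
    fun i => by field_simp [hc i]; ring
  have hpair : ∀ i j : Fin n, (c j.succ + (c j.succ)⁻¹) - (c i.succ + (c i.succ)⁻¹) =
      ((c j.succ)⁻¹ - (c i.succ)⁻¹) * (1 - c i.succ * c j.succ) :=
    fun i j => by field_simp [hc i, hc j]; ring
  have hsplit : ∏ α, ∏ β ∈ Ioi α, (1 - c α * c β) = (∏ j : Fin n, (1 - c 0 * c j.succ)) *
      ∏ i : Fin n, ∏ j ∈ Ioi i, (1 - c i.succ * c j.succ) := by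
    simp only [Fin.prod_univ_succ, Fin.prod_Ioi_zero, Fin.prod_Ioi_succ]
  have hsq := Fin.prod_prod_eq_prod_diag_mul_sq (fun i j : Fin n => 1 - c i.succ * c j.succ)
    fun i j => by ring
  rw [prod_comm] at hsq
  rw [hF, det_mul_column, det_vandermonde, det_symplecticVandermonde_eq_prod _ hc, hsplit]
  simp only [hE, hdiag, hpair, prod_mul_distrib, hsq]
  ring

theorem det_hankelSubToeplitz_prodOneSub_of_ne_zero (c : Fin (n + 1) → K)
    (hc : ∀ i : Fin n, c i.succ ≠ 0)
    (hH : (symplecticVandermonde fun i : Fin n => c i.succ).det ≠ 0) :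
    (hankelSubToeplitz n (prodOneSub c)).det = (-1) ^ n * ∏ α, ∏ β ∈ Ioi α, (1 - c α * c β) := by
  have hfactor := antisymmEvalMatrix_eq_mul (prodOneSub c) (natDegree_prodOneSub_le c)
    (fun i : Fin n => (c i.succ)⁻¹) fun i => inv_ne_zero (hc i)
  rw [symplecticVandermonde_inv] at hfactor
  have h := det_antisymmEvalMatrix_prodOneSub_inv c hc
  rw [hfactor, det_mul, det_neg, Fintype.card_fin, mul_assoc, mul_left_comm] at h
  rw [← mul_left_cancel₀ hH h]
  ring_nf
  simp [pow_mul']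

end Field

theorem det_hankelSubToeplitz_prodOneSub {R : Type*} [CommRing R] {n : ℕ}
    (c : Fin (n + 1) → R) :
    (hankelSubToeplitz n (prodOneSub c)).det = (-1) ^ n * ∏ α, ∏ β ∈ Ioi α, (1 - c α * c β) := by
  let A := MvPolynomial (Fin (n + 1)) ℤ
  let ι := algebraMap A (FractionRing A)
  have hι : Function.Injective ι := IsFractionRing.injective A (FractionRing A)
  have hne : ∀ p : A, MvPolynomial.eval 0 p ≠ 0 → ι p ≠ 0 := fun p h₀ h =>
    h₀ (by rw [(map_eq_zero_iff ι hι).1 h, map_zero])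
  have hX : ∀ i : Fin n, ι (MvPolynomial.X i.succ) ≠ 0 := fun i =>
    (map_ne_zero_iff ι hι).2 (MvPolynomial.X_ne_zero _)
  have hH : (symplecticVandermonde fun i : Fin n => ι (MvPolynomial.X i.succ)).det ≠ 0 := by
    rw [det_symplecticVandermonde _ hX]
    refine mul_ne_zero (mul_ne_zero (pow_ne_zero _ (neg_ne_zero.2 one_ne_zero))
      (prod_ne_zero_iff.2 fun i _ => mul_ne_zero (zpow_ne_zero _ (hX i)) ?_))
      (prod_ne_zero_iff.2 fun i _ => prod_ne_zero_iff.2 fun j hj => mul_ne_zero ?_ ?_)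
    · have h := hne (1 - MvPolynomial.X i.succ ^ 2) (by simp)
      rwa [map_sub, map_one, map_pow] at h
    · exact sub_ne_zero.2 (hι.ne (MvPolynomial.X_injective.ne
        (Fin.succ_injective _ |>.ne (mem_Ioi.1 hj).ne)))
    · have h := hne (1 - MvPolynomial.X i.succ * MvPolynomial.X j.succ) (by simp)
      rwa [map_sub, map_one, map_mul] at h
  have generic := det_hankelSubToeplitz_prodOneSub_of_ne_zero
    (fun k => ι (MvPolynomial.X k)) (fun i => hX i) hH
  have universal : (hankelSubToeplitz n (prodOneSub (MvPolynomial.X : Fin (n + 1) → A))).det =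
      (-1) ^ n * ∏ α, ∏ β ∈ Ioi α, (1 - MvPolynomial.X α * MvPolynomial.X β) :=
    hι (by simpa [map_det_hankelSubToeplitz_prodOneSub, map_prod] using generic)
  simpa [map_det_hankelSubToeplitz_prodOneSub, map_prod] using
    congrArg (MvPolynomial.eval₂Hom (Int.castRingHom R) c) universal

theorem det_antisymmEvalMatrix_prodOneSub {K : Type*} [Field K] {n : ℕ} (c : Fin (n + 1) → K)
    (x : Fin n → K) (hx : ∀ i, x i ≠ 0) :
    (antisymmEvalMatrix (prodOneSub c) x).det = (∏ α, ∏ β ∈ Ioi α, (1 - c α * c β)) *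
      (∏ i, x i ^ (-(n : ℤ)) * (1 - x i ^ 2)) *
        ∏ i, ∏ j ∈ Ioi i, (x i - x j) * (1 - x i * x j) := by
  rw [antisymmEvalMatrix_eq_mul _ (natDegree_prodOneSub_le c) x hx, det_mul,
    det_symplecticVandermonde x hx, det_hankelSubToeplitz_prodOneSub]
  ring_nf
  simp [pow_mul']

end Matrix

theorem stmt_17_general (n : ℕ)
    (x : Fin n → ℂ) (hx : ∀ i, x i ≠ 0) (c : Fin (n + 1) → ℂ)
    (P : Fin n → Polynomial ℂ)
    (hdeg : ∀ j : Fin n, (P j).natDegree ≤ j.val) :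
    Matrix.det (Matrix.of fun i j : Fin n =>
      x i ^ (-(j.val + 1 : ℤ)) * (∏ k, (1 - c k * x i)) * (P j).eval (x i)
        - x i ^ (j.val + 1 : ℤ) * (∏ k, (1 - c k / x i)) * (P j).eval (1 / x i))
    = (∏ i, (P i).eval 0) *
        (∏ i : Fin (n + 1), ∏ j ∈ Finset.Ioi i, (1 - c i * c j)) *
        (∏ i, x i ^ (-(n : ℤ)) * (1 - x i ^ 2)) *
        ∏ i : Fin n, ∏ j ∈ Finset.Ioi i, (x i - x j) * (1 - x i * x j) := by
  trans (Matrix.of fun i j : Fin n => (prodOneSub c * P j).antisymmEval (j + 1) (x i)).det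
  · congr 1
    ext i j
    simp only [Matrix.of_apply, antisymmEval, eval_mul, eval_prodOneSub, div_eq_mul_inv, one_mul,
      mul_assoc]
  rw [Matrix.of_antisymmEval_mul_eq_antisymmEvalMatrix_mul _ P hdeg x hx, Matrix.det_mul,
    Matrix.det_antisymmEvalMatrix_prodOneSub c x hx, Matrix.det_upperCoeffMatrix]
  ring

theorem stmt_17 (n : ℕ) (hn : 1 ≤ n)
    (x : Fin n → ℂ) (hx : ∀ i, x i ≠ 0) (c : Fin (n + 1) → ℂ)
    (P : Fin n → Polynomial ℂ)
    (hdeg : ∀ j : Fin n, (P j).natDegree ≤ j.val) :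
    Matrix.det (Matrix.of fun i j : Fin n =>
      x i ^ (-(j.val + 1 : ℤ)) * (∏ k, (1 - c k * x i)) * (P j).eval (x i)
        - x i ^ (j.val + 1 : ℤ) * (∏ k, (1 - c k / x i)) * (P j).eval (1 / x i))
    = (∏ i, (P i).eval 0) *
        (∏ i : Fin (n + 1), ∏ j ∈ Finset.Ioi i, (1 - c i * c j)) *
        (∏ i, x i ^ (-(n : ℤ)) * (1 - x i ^ 2)) *
        ∏ i : Fin n, ∏ j ∈ Finset.Ioi i, (x i - x j) * (1 - x i * x j) :=
  stmt_17_general n x hx c P hdeg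
end
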